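/- arXiv:1606.01844 — 4 statements merged into one kernel-verified Lean document; each statement's English description precedes it below -/
import Mathlib

section
/- Let X=(V,E,T) be a 2-dimensional simplicial complex and let G₁(X) = (V_{G₁}, E_{G₁}) be its edge-graph. For any subset of vertices S ⊆ V_{G₁} of the edge-graph, let F ⊆ E be the corresponding subset of edges of X. Then the number of edges of G₁(X) with exactly one endpoint in S equals the sum over all vertices v ∈ V of |δ(F_v)|, i.e., |E_{G₁}(S, S̄)| = Σ_{v ∈ V} |δ(F_v)|. -/
open Finset

/-- Symmetric-difference distance between two finite sets. -/
def sdist {α : Type} [DecidableEq α] (A B : Finset α) : ℕ :=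
  (A \ B).card + (B \ A).card

/-- Distance from a finite set to a family of finite sets. -/
noncomputable def famDist {α : Type} [DecidableEq α] (A : Finset α) (Z : Set (Finset α)) : ℕ :=
  sInf {d | ∃ z ∈ Z, sdist A z = d}

/-- `E` and `T` form the edges and triangles of a 2-dimensional simplicial complex on `V`. -/
def IsComplex {V : Type} [DecidableEq V] (E T : Finset (Finset V)) : Prop :=
  (∀ e ∈ E, e.card = 2) ∧ (∀ t ∈ T, t.card = 3) ∧
    ∀ t ∈ T, ∀ e, e ⊆ t → e.card = 2 → e ∈ E

/-- The complex is `(k₀, k₁)`-regular. -/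
def IsRegularComplex {V : Type} [Fintype V] [DecidableEq V]
    (E T : Finset (Finset V)) (k₀ k₁ : ℕ) : Prop :=
  (∀ v : V, (E.filter (fun e => v ∈ e)).card = k₀) ∧
    ∀ e ∈ E, (T.filter (fun t => e ⊆ t)).card = k₁

/-- Coboundary of a set of vertices: edges with exactly one endpoint in `S`. -/
def delta0 {V : Type} [DecidableEq V] (E : Finset (Finset V)) (S : Finset V) :
    Finset (Finset V) :=
  E.filter (fun e => (e ∩ S).card = 1)

/-- Coboundary of a set of edges: triangles containing an odd number of edges of `F`. -/
def delta1 {V : Type} [DecidableEq V] (T F : Finset (Finset V)) : Finset (Finset V) :=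
  T.filter (fun t => Odd ((F.filter (fun e => e ⊆ t)).card))

/-- Local view of a vertex `v` with regard to a set of edges `F`. -/
def localView {V : Type} [DecidableEq V] (F : Finset (Finset V)) (v : V) :
    Finset (Finset V) :=
  F.filter (fun e => v ∈ e)

/-- The 0-cocycles. -/
def Z0 {V : Type} [DecidableEq V] (E : Finset (Finset V)) : Set (Finset V) :=
  {S | delta0 E S = ∅}

/-- The 1-coboundaries: coboundaries of vertex sets (cuts). -/
def B1 {V : Type} [Fintype V] [DecidableEq V] (E : Finset (Finset V)) :
    Set (Finset (Finset V)) :=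
  {B | ∃ S : Finset V, B = delta0 E S}

/-- The 1-cocycles: sets of edges with empty coboundary. -/
def Z1 {V : Type} [DecidableEq V] (E T : Finset (Finset V)) : Set (Finset (Finset V)) :=
  {F | F ⊆ E ∧ delta1 T F = ∅}

/-- `(ε, μ)`-cosystolic expansion of a `(k₀, k₁)`-regular 2-dimensional complex. -/
def IsCosystolicExpander {V : Type} [Fintype V] [DecidableEq V]
    (E T : Finset (Finset V)) (k₀ k₁ : ℕ) (ε μ : ℝ) : Prop :=
  (∀ S : Finset V,
      (delta0 E S = ∅ →
        S = ∅ ∨ S = Finset.univ ∨ μ * (Fintype.card V : ℝ) ≤ (S.card : ℝ)) ∧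
      (delta0 E S ≠ ∅ →
        ε * (k₀ : ℝ) * (famDist S (Z0 E) : ℝ) ≤ ((delta0 E S).card : ℝ))) ∧
  (∀ F : Finset (Finset V), F ⊆ E →
      (delta1 T F = ∅ → F ∈ B1 E ∨ μ * (E.card : ℝ) ≤ (F.card : ℝ)) ∧
      (delta1 T F ≠ ∅ →
        ε * (k₁ : ℝ) * (famDist F (Z1 E T) : ℝ) ≤ ((delta1 T F).card : ℝ)))

/-- The underlying graph `G₀(X)` of the complex. -/
def G0 {V : Type} [DecidableEq V] (E : Finset (Finset V)) : SimpleGraph V where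
  Adj u v := u ≠ v ∧ ({u, v} : Finset V) ∈ E
  symm := ⟨fun u v h => ⟨h.1.symm, by rw [Finset.pair_comm]; exact h.2⟩⟩
  loopless := ⟨fun v h => h.1 rfl⟩

instance {V : Type} [DecidableEq V] (E : Finset (Finset V)) : DecidableRel (G0 E).Adj :=
  fun _ _ => inferInstanceAs (Decidable (_ ∧ _))

/-- The edge-graph `G₁(X)` of the complex: vertices are the edges of `X`, two edges
adjacent iff their union is a triangle. -/
def EdgeGraph {V : Type} [DecidableEq V] (E T : Finset (Finset V)) :
    SimpleGraph {e // e ∈ E} where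
  Adj e f := e ≠ f ∧ (e.val ∪ f.val) ∈ T
  symm := ⟨fun e f h => ⟨h.1.symm, by rw [Finset.union_comm]; exact h.2⟩⟩
  loopless := ⟨fun e h => h.1 rfl⟩

instance {V : Type} [DecidableEq V] (E T : Finset (Finset V)) :
    DecidableRel (EdgeGraph E T).Adj :=
  fun _ _ => inferInstanceAs (Decidable (_ ∧ _))

lemma adjMatrix_isHermitian {α : Type} [Fintype α] (G : SimpleGraph α)
    [DecidableRel G.Adj] : (SimpleGraph.adjMatrix ℝ G).IsHermitian := by
  refine Matrix.IsHermitian.ext fun i j => ?_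
  simp [SimpleGraph.adjMatrix_apply, SimpleGraph.adj_comm]

/-- The eigenvalues of the adjacency matrix of `G`, sorted in ascending order. -/
noncomputable def eigsAsc {α : Type} [Fintype α] [DecidableEq α] (G : SimpleGraph α)
    [DecidableRel G.Adj] : List ℝ :=
  Multiset.sort
    ((Finset.univ : Finset α).val.map (adjMatrix_isHermitian G).eigenvalues) (· ≤ ·)

/-- The normalized `i`-th largest adjacency eigenvalue (1-indexed) of a `k`-regular
graph `G`: `λ̃ᵢ = λᵢ / k`. -/
noncomputable def normEig {α : Type} [Fintype α] [DecidableEq α] (G : SimpleGraph α)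
    [DecidableRel G.Adj] (k i : ℕ) : ℝ :=
  (eigsAsc G).getD (Fintype.card α - i) 0 / (k : ℝ)

/-- The number of edges of `G` with exactly one endpoint in `S` (counted via the
ordered pairs `(u, v)` with `u ∈ S`, `v ∉ S`, `u ~ v`). -/
def cutEdges {α : Type} [Fintype α] [DecidableEq α] (G : SimpleGraph α)
    [DecidableRel G.Adj] (S : Finset α) : ℕ :=
  ((S ×ˢ Sᶜ).filter fun p => G.Adj p.1 p.2).card

/-- The normalized Cheeger constant of a `k`-regular graph. -/
noncomputable def normCheeger {α : Type} [Fintype α] [DecidableEq α] (G : SimpleGraph α)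
    [DecidableRel G.Adj] (k : ℕ) : ℝ :=
  sInf {x : ℝ | ∃ S : Finset α, 0 < S.card ∧ (S.card : ℝ) ≤ (Fintype.card α : ℝ) / 2 ∧
    x = (cutEdges G S : ℝ) / ((k : ℝ) * (S.card : ℝ))}

/-- The random walk on the `d`-regular graph `G` is `a`-rapidly mixing: from any initial
distribution, after `i` steps of the walk (with transition matrix `(1/d) • A(G)`),
the ℓ₂ distance to the uniform distribution is at most `a ^ i`. -/
def WalkRapidMixing {α : Type} [Fintype α] [DecidableEq α] (G : SimpleGraph α)
    [DecidableRel G.Adj] (d : ℕ) (a : ℝ) : Prop :=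
  ∀ p₀ : α → ℝ, (∀ x, 0 ≤ p₀ x) → (∑ x, p₀ x = 1) → ∀ i : ℕ,
    Real.sqrt (∑ x, ((((d : ℝ)⁻¹ • SimpleGraph.adjMatrix ℝ G) ^ i).mulVec p₀ x
      - (Fintype.card α : ℝ)⁻¹) ^ 2) ≤ a ^ i

/-!
Both sides are sums over triangles. If `k` of the three edges of a triangle `t` lie in `F`, then
`t` contributes `k * (3 - k)` ordered pairs `(e, f)` with `e ∈ F`, `f ∉ F` to the cut. On the other
side, a vertex `v ∈ t` lies on every edge of `t` except the opposite one, `t \ {v}`, so it sees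
`k - [t \ {v} ∈ F]` edges of `F` in `t`; as `v ↦ t \ {v}` is a bijection onto the edges of `t`, the
number of vertices seeing an odd number is `k` for even `k` and `3 - k` for odd `k`, which is again
`k * (3 - k)` because `k ≤ 3`.
-/
namespace Finset

variable {α : Type} [DecidableEq α] {s e f : Finset α} {A : Finset (Finset α)} {a : α}

theorem image_erase_eq_powersetCard (hs : s.Nonempty) :
    s.image s.erase = s.powersetCard (#s - 1) := by
  refine eq_of_subset_of_card_le (fun e he => ?_) ?_
  · obtain ⟨a, ha, rfl⟩ := mem_image.mp he
    exact mem_powersetCard.mpr ⟨erase_subset a s, card_erase_of_mem ha⟩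
  · rw [card_image_of_injOn s.erase_injOn, card_powersetCard, Nat.choose_symm hs.card_pos,
      Nat.choose_one_right]

theorem mem_iff_ne_erase_of_mem_powersetCard (ha : a ∈ s) (he : e ∈ s.powersetCard (#s - 1)) :
    a ∈ e ↔ e ≠ s.erase a := by
  rw [mem_powersetCard] at he
  refine ⟨fun hae h => notMem_erase a s (h ▸ hae), fun hne => ?_⟩
  by_contra hae
  refine hne (eq_of_subset_of_card_le (fun x hx => mem_erase.mpr ⟨?_, he.1 hx⟩) ?_)
  · rintro rfl; exact hae hx
  · rw [card_erase_of_mem ha, he.2]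

theorem union_eq_of_mem_powersetCard (he : e ∈ s.powersetCard (#s - 1))
    (hf : f ∈ s.powersetCard (#s - 1)) (hef : e ≠ f) : e ∪ f = s := by
  rw [mem_powersetCard] at he hf
  refine eq_of_subset_of_card_le (union_subset he.1 hf.1) ?_
  have hlt : #e < #(e ∪ f) := by
    refine card_lt_card (ssubset_of_subset_of_ne subset_union_left fun h => hef ?_)
    exact (eq_of_subset_of_card_le (h ▸ subset_union_right) (by rw [he.2, hf.2])).symm
  omega

theorem filter_mem_eq_erase (hA : A ⊆ s.powersetCard (#s - 1)) (ha : a ∈ s) :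
    {e ∈ A | a ∈ e} = A.erase (s.erase a) := by
  ext e
  rw [mem_filter, mem_erase, and_comm (a := e ≠ _)]
  exact and_congr_right fun he => mem_iff_ne_erase_of_mem_powersetCard ha (hA he)

theorem odd_card_filter_mem_iff (hA : A ⊆ s.powersetCard (#s - 1)) (ha : a ∈ s) :
    Odd #{e ∈ A | a ∈ e} ↔ (s.erase a ∈ A ↔ Even #A) := by
  rw [filter_mem_eq_erase hA ha]
  by_cases h : s.erase a ∈ A
  · have := card_erase_add_one h
    rw [iff_true_left h, ← this, Nat.even_add_one, Nat.not_even_iff_odd]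
  · rw [erase_eq_of_notMem h, iff_false_left h, Nat.not_even_iff_odd]

theorem card_mul_card_sdiff_eq_card_filter_odd (hs : #s = 3) (hA : A ⊆ s.powersetCard 2) :
    #A * #(s.powersetCard 2 \ A) = #{a ∈ s | Odd #{e ∈ A | a ∈ e}} := by
  have hP : s.powersetCard 2 = s.powersetCard (#s - 1) := by rw [hs]
  rw [hP] at hA ⊢
  have hne : s.Nonempty := card_pos.mp (by omega)
  calc #A * #(s.powersetCard (#s - 1) \ A)
      = if Even #A then #A else #(s.powersetCard (#s - 1) \ A) := by
        rw [card_sdiff_of_subset hA, card_powersetCard, hs]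
        have hA3 : #A ≤ 3 := by simpa [hs] using card_le_card hA
        interval_cases #A <;> decide
    _ = #{e ∈ s.powersetCard (#s - 1) | e ∈ A ↔ Even #A} := by
        split_ifs with h
        · simp only [h, iff_true, filter_mem_eq_inter, inter_eq_right.mpr hA]
        · simp only [h, iff_false, ← sdiff_eq_filter]
    _ = #{a ∈ s | s.erase a ∈ A ↔ Even #A} := by
        rw [← image_erase_eq_powersetCard hne, filter_image,
          card_image_of_injOn (s.erase_injOn.mono (filter_subset _ _))]
    _ = #{a ∈ s | Odd #{e ∈ A | a ∈ e}} :=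
        congrArg card (filter_congr fun _ ha => (odd_card_filter_mem_iff hA ha).symm)

end Finset

section EdgeGraph

variable {V : Type} [DecidableEq V] {E T F : Finset (Finset V)} {t : Finset V}

theorem cutEdges_edgeGraph_eq_card (S : Finset {e // e ∈ E}) :
    cutEdges (EdgeGraph E T) S =
      #{p ∈ S.image Subtype.val ×ˢ (E \ S.image Subtype.val) | p.1 ∪ p.2 ∈ T} := by
  refine card_bij (fun p _ => (p.1.val, p.2.val)) ?_ ?_ ?_
  · rintro ⟨e, f⟩ hp
    simp only [mem_filter, mem_product, mem_compl, mem_sdiff, mem_image] at hp ⊢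
    obtain ⟨⟨he, hf⟩, -, hT⟩ := hp
    exact ⟨⟨⟨e, he, rfl⟩, f.2, fun ⟨g, hg, hgf⟩ => hf (Subtype.ext hgf ▸ hg)⟩, hT⟩
  · rintro ⟨e, f⟩ - ⟨e', f'⟩ - h
    simp only [Prod.mk.injEq] at h
    exact Prod.ext (Subtype.ext h.1) (Subtype.ext h.2)
  · rintro ⟨e, f⟩ hp
    simp only [mem_filter, mem_product, mem_sdiff, mem_image] at hp
    obtain ⟨⟨⟨e, he, rfl⟩, hfE, hfS⟩, hT⟩ := hp
    have hf : ⟨f, hfE⟩ ∉ S := fun hf => hfS ⟨_, hf, rfl⟩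
    exact ⟨(e, ⟨f, hfE⟩), mem_filter.mpr ⟨mem_product.mpr ⟨he, mem_compl.mpr hf⟩,
      ne_of_mem_of_not_mem he hf, hT⟩, rfl⟩

theorem filter_subset_subset_powersetCard (hX : IsComplex E T) (hF : F ⊆ E) :
    {e ∈ F | e ⊆ t} ⊆ t.powersetCard 2 := fun e he => by
  rw [mem_filter] at he
  exact mem_powersetCard.mpr ⟨he.2, hX.1 e (hF he.1)⟩

theorem filter_union_eq_product_sdiff (hX : IsComplex E T) (hF : F ⊆ E) (ht : t ∈ T) :
    {p ∈ F ×ˢ (E \ F) | p.1 ∪ p.2 = t} =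
      {e ∈ F | e ⊆ t} ×ˢ (t.powersetCard 2 \ {e ∈ F | e ⊆ t}) := by
  ext ⟨e, f⟩
  simp only [mem_filter, mem_product, mem_sdiff, mem_powersetCard, not_and]
  constructor
  · rintro ⟨⟨heF, hfE, hfF⟩, rfl⟩
    exact ⟨⟨heF, subset_union_left⟩, ⟨subset_union_right, hX.1 f hfE⟩, fun hf => absurd hf hfF⟩
  · rintro ⟨⟨heF, het⟩, ⟨hft, hf2⟩, hfF⟩
    have hfF' : f ∉ F := fun hf => hfF hf hft
    have hP : t.powersetCard 2 = t.powersetCard (#t - 1) := by rw [hX.2.1 t ht]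
    refine ⟨⟨heF, hX.2.2 t ht f hft hf2, hfF'⟩, union_eq_of_mem_powersetCard ?_ ?_ ?_⟩
    · exact hP ▸ filter_subset_subset_powersetCard hX hF (mem_filter.mpr ⟨heF, het⟩)
    · exact hP ▸ mem_powersetCard.mpr ⟨hft, hf2⟩
    · exact ne_of_mem_of_not_mem heF hfF'

theorem card_delta1_localView (F : Finset (Finset V)) (v : V) :
    #(delta1 T (localView F v)) = ∑ t ∈ T, if Odd #{e ∈ {e ∈ F | e ⊆ t} | v ∈ e} then 1 else 0 := by
  rw [delta1, localView, card_filter]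
  simp only [filter_comm]

end EdgeGraph

theorem edge_cut_eq_sum_of_coboundaries_of_local_views
    {V : Type} [Fintype V] [DecidableEq V] (E T : Finset (Finset V))
    (hX : IsComplex E T) (S : Finset {e // e ∈ E}) :
    cutEdges (EdgeGraph E T) S =
      ∑ v : V, (delta1 T (localView (S.image Subtype.val) v)).card := by
  set F := S.image Subtype.val
  have hF : F ⊆ E := fun e he => by
    obtain ⟨x, -, rfl⟩ := mem_image.mp he
    exact x.2
  simp only [cutEdges_edgeGraph_eq_card, card_delta1_localView]
  rw [← sum_card_fiberwise_eq_card_filter, sum_comm]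
  refine sum_congr rfl fun t ht => ?_
  have hA := filter_subset_subset_powersetCard (t := t) hX hF
  rw [filter_union_eq_product_sdiff hX hF ht, card_product,
    card_mul_card_sdiff_eq_card_filter_odd (hX.2.1 t ht) hA, card_filter]
  refine sum_subset (subset_univ t) fun v _ hv => if_neg fun hodd => hv ?_
  obtain ⟨e, he⟩ := card_pos.mp hodd.pos
  simp only [mem_filter] at he
  exact he.1.2 he.2
end

section
/- Let G=(V,E) be a k-regular graph with normalized second largest adjacency eigenvalue λ̃₂ < 1/2, and suppose |V| ≥ 4/(1−2λ̃₂). Then for every subset of vertices S with ∅ ≠ S ⊊ V, the number of edges with exactly one endpoint in S satisfies |E(S, S̄)| ≥ k. -/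
open Finset

/-!
If `#S ≤ k`, every vertex of `S` has at least `k + 1 - #S` neighbours outside `S`, so the cut has
at least `#S * (k + 1 - #S) ≥ k` edges; the same applies to `Sᶜ`, which has the same cut.
Otherwise `#S, #Sᶜ ≥ 2`. The vector `z = n • 𝟙_S - #S • 1` is orthogonal to the constants, the
eigenvector of the top eigenvalue `k`, so `z ⬝ A z ≤ λ₂ (z ⬝ z)`, while the Laplacian
`kI - A` gives `z ⬝ (kI - A) z = n² |E(S, Sᶜ)|`. Hence
`n |E(S, Sᶜ)| ≥ (k - λ₂) #S #Sᶜ ≥ (k - λ₂) 2 (n - 2)`, and this is at least `k n` when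
`n ≥ 4 / (1 - 2 λ̃₂)` with `λ̃₂ = λ₂ / k`.
-/

open Matrix

namespace Matrix.IsHermitian

variable {n : Type*} [Fintype n] [DecidableEq n] {A : Matrix n n ℝ}

lemma exists_forall_ne_eigenvalues_le (hA : A.IsHermitian) (h : 1 < Fintype.card n) :
    ∃ j, ∀ i ≠ j, hA.eigenvalues i ≤ hA.eigenvalues₀ ⟨1, h⟩ := by
  set e := Fintype.equivOfCardEq (α := Fin (Fintype.card n)) (β := n) (Fintype.card_fin _)
  refine ⟨e ⟨0, by omega⟩, fun i hi => hA.eigenvalues₀_antitone ?_⟩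
  have : e.symm i ≠ ⟨0, by omega⟩ := fun h0 => hi (by rw [← h0, Equiv.apply_symm_apply])
  exact Fin.le_def.mpr (Nat.one_le_iff_ne_zero.mpr fun h' => this (Fin.ext h'))

/- In an orthonormal eigenbasis the eigenvector `v` has a nonzero coordinate only at `j`, so
`x ⊥ v` kills the coordinate of `x` at the one eigenvalue that may exceed `L`. -/
lemma dotProduct_mulVec_le_of_dotProduct_eq_zero (hA : A.IsHermitian) {v : n → ℝ} {μ L : ℝ}
    (hv : A *ᵥ v = μ • v) (hv0 : v ≠ 0) (hLμ : L < μ) {j : n}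
    (hj : ∀ i ≠ j, hA.eigenvalues i ≤ L) {x : n → ℝ} (hx : x ⬝ᵥ v = 0) :
    x ⬝ᵥ A *ᵥ x ≤ L * (x ⬝ᵥ x) := by
  set b := hA.eigenvectorBasis
  set c : (n → ℝ) → n → ℝ := fun y i => y ⬝ᵥ b i
  have parseval (y z : n → ℝ) : y ⬝ᵥ z = ∑ i, c y i * c z i := by
    have := b.sum_inner_mul_inner (WithLp.toLp 2 z) (WithLp.toLp 2 y)
    simp only [EuclideanSpace.inner_eq_star_dotProduct, star_trivial] at this
    rw [← this]
    exact sum_congr rfl fun i _ => by simp [c, dotProduct_comm, mul_comm]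
  have coord_mulVec (y : n → ℝ) (i : n) : c (A *ᵥ y) i = hA.eigenvalues i * c y i := by
    simp only [c]
    rw [dotProduct_comm, dotProduct_mulVec, ← mulVec_transpose,
      ← conjTranspose_eq_transpose_of_trivial, hA.eq, hA.mulVec_eigenvectorBasis, smul_dotProduct,
      dotProduct_comm, smul_eq_mul]
  have hcv : ∀ i ≠ j, c v i = 0 := by
    intro i hi
    have h := coord_mulVec v i
    simp only [hv, c, smul_dotProduct, smul_eq_mul] at h
    have : (μ - hA.eigenvalues i) * c v i = 0 := by linarith
    exact (mul_eq_zero.mp this).resolve_left (by linarith [hj i hi])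
  have hcvj : c v j ≠ 0 := by
    intro h0
    apply hv0
    rw [← dotProduct_self_eq_zero, parseval]
    refine sum_eq_zero fun i _ => ?_
    rcases eq_or_ne i j with rfl | hi
    · rw [h0, zero_mul]
    · rw [hcv i hi, zero_mul]
  have hcxj : c x j = 0 := by
    rw [parseval, sum_eq_single j (fun i _ hi => by rw [hcv i hi, mul_zero]) (by simp)] at hx
    exact (mul_eq_zero.mp hx).resolve_right hcvj
  calc x ⬝ᵥ A *ᵥ x = ∑ i, hA.eigenvalues i * c x i ^ 2 := by
        rw [parseval]
        exact sum_congr rfl fun i _ => by rw [coord_mulVec]; ring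
    _ ≤ ∑ i, L * c x i ^ 2 := by
        refine sum_le_sum fun i _ => ?_
        rcases eq_or_ne i j with rfl | hi
        · simp [hcxj]
        · exact mul_le_mul_of_nonneg_right (hj i hi) (sq_nonneg _)
    _ = L * (x ⬝ᵥ x) := by
        rw [parseval, mul_sum]
        exact sum_congr rfl fun i _ => by ring

end Matrix.IsHermitian

section LargeCuts

variable {α : Type} [Fintype α] [DecidableEq α] {G : SimpleGraph α} [DecidableRel G.Adj]

lemma eigsAsc_eq_reverse_ofFn :
    eigsAsc G = (List.ofFn (adjMatrix_isHermitian G).eigenvalues₀).reverse := by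
  set hA := adjMatrix_isHermitian G
  have hmap : (univ : Finset α).val.map hA.eigenvalues = (List.ofFn hA.eigenvalues₀).reverse := by
    rw [Multiset.coe_reverse, ← Fin.univ_val_map, ← Multiset.map_univ_val_equiv
      (Fintype.equivOfCardEq (α := Fin (Fintype.card α)) (β := α) (Fintype.card_fin _)),
      Multiset.map_map]
    congr 1
    ext i
    simp [Matrix.IsHermitian.eigenvalues]
  rw [eigsAsc, hmap, Multiset.coe_sort]
  apply List.mergeSort_of_pairwise
  simp only [decide_eq_true_eq, List.pairwise_reverse]
  exact hA.eigenvalues₀_antitone.sortedGE_ofFn.pairwise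

lemma normEig_succ (k : ℕ) {i : ℕ} (hi : i < Fintype.card α) :
    normEig G k (i + 1) = (adjMatrix_isHermitian G).eigenvalues₀ ⟨i, hi⟩ / k := by
  rw [normEig, eigsAsc_eq_reverse_ofFn, List.getD_eq_getElem _ _ (by simp; omega),
    List.getElem_reverse, List.getElem_ofFn]
  congr 3
  simp only [List.length_ofFn]
  omega

lemma cutEdges_compl (S : Finset α) : cutEdges G Sᶜ = cutEdges G S := by
  refine card_bij (fun p _ => p.swap) ?_ (fun p _ q _ h => Prod.swap_injective h) ?_
  · rintro ⟨u, v⟩ h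
    simp only [mem_filter, mem_product, compl_compl] at h ⊢
    exact ⟨⟨h.1.2, h.1.1⟩, h.2.symm⟩
  · rintro ⟨u, v⟩ h
    refine ⟨(v, u), ?_, rfl⟩
    simp only [mem_filter, mem_product, compl_compl] at h ⊢
    exact ⟨⟨h.1.2, h.1.1⟩, h.2.symm⟩

lemma cutEdges_eq_sum_card_filter_adj (S : Finset α) :
    cutEdges G S = ∑ u ∈ S, #{v ∈ Sᶜ | G.Adj u v} := by
  rw [cutEdges, card_filter, sum_product]
  simp_rw [card_filter]

lemma degree_le_card_sub_one_add (S : Finset α) {u : α} (hu : u ∈ S) :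
    G.degree u ≤ #S - 1 + #{v ∈ Sᶜ | G.Adj u v} := by
  have hsub : G.neighborFinset u ⊆ S.erase u ∪ {v ∈ Sᶜ | G.Adj u v} := by
    intro v hv
    rw [SimpleGraph.mem_neighborFinset] at hv
    by_cases hvS : v ∈ S
    · exact mem_union_left _ (mem_erase.mpr ⟨hv.ne.symm, hvS⟩)
    · exact mem_union_right _ (mem_filter.mpr ⟨mem_compl.mpr hvS, hv⟩)
  calc G.degree u = #(G.neighborFinset u) := (G.card_neighborFinset_eq_degree u).symm
    _ ≤ _ := (card_le_card hsub).trans (card_union_le _ _)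
    _ = _ := by rw [card_erase_of_mem hu]

lemma le_cutEdges_of_card_le {k : ℕ} (hreg : G.IsRegularOfDegree k) {S : Finset α}
    (hS : S.Nonempty) (hSk : #S ≤ k) : k ≤ cutEdges G S := by
  have hS1 : 1 ≤ #S := hS.card_pos
  have hvertex : ∀ u ∈ S, k + 1 - #S ≤ #{v ∈ Sᶜ | G.Adj u v} := fun u hu => by
    have := degree_le_card_sub_one_add (G := G) S hu
    rw [hreg u] at this
    omega
  have hsum := card_nsmul_le_sum S _ _ hvertex
  rw [← cutEdges_eq_sum_card_filter_adj, smul_eq_mul] at hsum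
  obtain ⟨m, rfl⟩ : ∃ m, k = #S + m := ⟨k - #S, by omega⟩
  rw [show #S + m + 1 - #S = m + 1 by omega] at hsum
  nlinarith

lemma cutEdges_eq_indicator_dotProduct (S : Finset α) :
    (cutEdges G S : ℝ) =
      (S : Set α).indicator 1 ⬝ᵥ G.adjMatrix ℝ *ᵥ (↑Sᶜ : Set α).indicator 1 := by
  have hterm (i j : α) : (if G.Adj i j then
      (S : Set α).indicator (1 : α → ℝ) i * (↑Sᶜ : Set α).indicator 1 j else 0) =
      if i ∈ S then (if j ∈ Sᶜ then (if G.Adj i j then 1 else 0) else 0) else 0 := by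
    simp only [Set.indicator_apply, mem_coe, Pi.one_apply]
    split_ifs <;> simp
  simp only [SimpleGraph.dotProduct_mulVec_adjMatrix, hterm, sum_ite_irrel, sum_const_zero,
    sum_ite_mem_eq, cutEdges_eq_sum_card_filter_adj, Nat.cast_sum, card_filter, Nat.cast_ite,
    Nat.cast_one, Nat.cast_zero]

lemma indicator_dotProduct_lapMatrix_mulVec_indicator (S : Finset α) :
    (S : Set α).indicator 1 ⬝ᵥ G.lapMatrix ℝ *ᵥ (S : Set α).indicator 1 = cutEdges G S := by
  have hxy : (S : Set α).indicator (1 : α → ℝ) = 1 - (↑Sᶜ : Set α).indicator 1 := by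
    rw [coe_compl, Set.indicator_compl, sub_sub_cancel]
  set x := (S : Set α).indicator (1 : α → ℝ)
  set y := (↑Sᶜ : Set α).indicator (1 : α → ℝ)
  have hL1 : G.lapMatrix ℝ *ᵥ 1 = 0 := G.lapMatrix_mulVec_const_eq_zero
  have hdeg : x ⬝ᵥ G.degMatrix ℝ *ᵥ y = 0 := by
    simp only [dotProduct, SimpleGraph.degMatrix, mulVec_diagonal]
    refine sum_eq_zero fun i _ => ?_
    by_cases hi : i ∈ S <;> simp [x, y, hi]
  calc x ⬝ᵥ G.lapMatrix ℝ *ᵥ x = x ⬝ᵥ G.lapMatrix ℝ *ᵥ (1 - y) := by rw [← hxy]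
    _ = x ⬝ᵥ G.adjMatrix ℝ *ᵥ y := by
        rw [mulVec_sub, hL1, zero_sub, dotProduct_neg, SimpleGraph.lapMatrix, sub_mulVec,
          dotProduct_sub, hdeg, zero_sub, neg_neg]
    _ = cutEdges G S := (cutEdges_eq_indicator_dotProduct S).symm

lemma dotProduct_lapMatrix_mulVec_affine (a c : ℝ) (x : α → ℝ) :
    (fun i => a * x i + c) ⬝ᵥ G.lapMatrix ℝ *ᵥ (fun i => a * x i + c) =
      a ^ 2 * (x ⬝ᵥ G.lapMatrix ℝ *ᵥ x) := by
  simp only [← toLinearMap₂'_apply', SimpleGraph.lapMatrix_toLinearMap₂', mul_div_assoc', mul_sum]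
  congr 1
  refine sum_congr rfl fun i _ => sum_congr rfl fun j _ => ?_
  split_ifs <;> ring

lemma dotProduct_lapMatrix_mulVec_of_isRegularOfDegree {k : ℕ} (hreg : G.IsRegularOfDegree k)
    (x : α → ℝ) :
    x ⬝ᵥ G.lapMatrix ℝ *ᵥ x = k * (x ⬝ᵥ x) - x ⬝ᵥ G.adjMatrix ℝ *ᵥ x := by
  rw [SimpleGraph.lapMatrix, sub_mulVec, dotProduct_sub, SimpleGraph.dotProduct_mulVec_degMatrix]
  simp only [hreg _, mul_assoc, ← mul_sum]
  rfl

lemma dotProduct_adjMatrix_mulVec_le {k : ℕ} (hreg : G.IsRegularOfDegree k)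
    (h : 1 < Fintype.card α) (hgap : (adjMatrix_isHermitian G).eigenvalues₀ ⟨1, h⟩ < k)
    {x : α → ℝ} (hx : ∑ i, x i = 0) :
    x ⬝ᵥ G.adjMatrix ℝ *ᵥ x ≤ (adjMatrix_isHermitian G).eigenvalues₀ ⟨1, h⟩ * (x ⬝ᵥ x) := by
  obtain ⟨j, hj⟩ := (adjMatrix_isHermitian G).exists_forall_ne_eigenvalues_le h
  have hone : G.adjMatrix ℝ *ᵥ 1 = (k : ℝ) • 1 := by
    ext v
    simpa using SimpleGraph.adjMatrix_mulVec_const_apply_of_regular (a := (1 : ℝ)) hreg (v := v)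
  have : Nonempty α := Fintype.card_pos_iff.mp (by omega)
  exact (adjMatrix_isHermitian G).dotProduct_mulVec_le_of_dotProduct_eq_zero hone
    one_ne_zero hgap hj (by rw [dotProduct_one, hx])

theorem sub_mul_card_mul_card_compl_le_mul_cutEdges {k : ℕ} (hreg : G.IsRegularOfDegree k)
    (h : 1 < Fintype.card α) (hgap : (adjMatrix_isHermitian G).eigenvalues₀ ⟨1, h⟩ < k)
    (S : Finset α) :
    (k - (adjMatrix_isHermitian G).eigenvalues₀ ⟨1, h⟩) * (#S * #Sᶜ) ≤
      Fintype.card α * cutEdges G S := by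
  have hn : (#S : ℝ) + #Sᶜ = Fintype.card α := by exact_mod_cast card_add_card_compl S
  set n : ℝ := (Fintype.card α : ℝ)
  set s : ℝ := (#S : ℝ)
  set s' : ℝ := (#Sᶜ : ℝ)
  have hn0 : 0 < n := by positivity
  set z : α → ℝ := fun i => n * (S : Set α).indicator 1 i + -s
  have hzS : ∀ i ∈ S, z i = s' := fun i hi => by simp [z, hi, ← hn]
  have hzSc : ∀ i ∈ Sᶜ, z i = -s := fun i hi => by simp [z, mem_compl.mp hi]
  have hz_sum : ∑ i, z i = 0 := by
    rw [← sum_add_sum_compl S, sum_congr rfl hzS, sum_congr rfl hzSc]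
    simp only [sum_const, nsmul_eq_mul]
    ring
  have hz_sq : z ⬝ᵥ z = n * (s * s') := by
    rw [dotProduct, ← sum_add_sum_compl S,
      sum_congr rfl fun i hi => show z i * z i = s' * s' by rw [hzS i hi],
      sum_congr rfl fun i hi => show z i * z i = -s * -s by rw [hzSc i hi]]
    simp only [sum_const, nsmul_eq_mul, ← hn]
    ring
  have hlap : z ⬝ᵥ G.lapMatrix ℝ *ᵥ z = n ^ 2 * cutEdges G S := by
    rw [dotProduct_lapMatrix_mulVec_affine, indicator_dotProduct_lapMatrix_mulVec_indicator]
  rw [dotProduct_lapMatrix_mulVec_of_isRegularOfDegree hreg, hz_sq] at hlap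
  have hray := dotProduct_adjMatrix_mulVec_le hreg h hgap hz_sum
  rw [hz_sq] at hray
  have : n * ((k - (adjMatrix_isHermitian G).eigenvalues₀ ⟨1, h⟩) * (s * s')) ≤
      n * (n * cutEdges G S) := by
    nlinarith
  exact le_of_mul_le_mul_left this hn0

lemma add_le_one_sub_mul_mul {ℓ s t : ℝ} (hℓ : ℓ < 1 / 2) (h : 4 / (1 - 2 * ℓ) ≤ s + t)
    (hs : 2 ≤ s) (ht : 2 ≤ t) : s + t ≤ (1 - ℓ) * (s * t) := by
  rw [div_le_iff₀ (by linarith)] at h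
  nlinarith [mul_nonneg (sub_nonneg.mpr hs) (sub_nonneg.mpr ht)]

end LargeCuts

theorem large_cuts
    {α : Type} [Fintype α] [DecidableEq α] (G : SimpleGraph α) [DecidableRel G.Adj]
    (k : ℕ) (hreg : G.IsRegularOfDegree k)
    (hlam : normEig G k 2 < 1 / 2)
    (hV : 4 / (1 - 2 * normEig G k 2) ≤ (Fintype.card α : ℝ))
    (S : Finset α) (hS : S ≠ ∅) (hS' : S ≠ Finset.univ) :
    k ≤ cutEdges G S := by
  rcases Nat.eq_zero_or_pos k with rfl | hk
  · exact Nat.zero_le _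
  by_cases hSk : #S ≤ k
  · exact le_cutEdges_of_card_le hreg (nonempty_iff_ne_empty.mpr hS) hSk
  by_cases hSck : #Sᶜ ≤ k
  · rw [← cutEdges_compl]
    exact le_cutEdges_of_card_le hreg
      (nonempty_iff_ne_empty.mpr ((compl_eq_empty_iff S).not.mpr hS')) hSck
  have hcard : (#S : ℝ) + #Sᶜ = Fintype.card α := by exact_mod_cast card_add_card_compl S
  have h1 : 1 < Fintype.card α := by have := card_add_card_compl S; omega
  have hμ₂ : (adjMatrix_isHermitian G).eigenvalues₀ ⟨1, h1⟩ = k * normEig G k 2 := by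
    have hkR : (k : ℝ) ≠ 0 := by positivity
    rw [normEig_succ k h1]
    field_simp
  have hspec := sub_mul_card_mul_card_compl_le_mul_cutEdges hreg h1
    (by rw [hμ₂]; nlinarith [(by exact_mod_cast hk : (0 : ℝ) < k)]) S
  have harith := add_le_one_sub_mul_mul hlam (hcard ▸ hV)
    (by exact_mod_cast (by omega : 2 ≤ #S)) (by exact_mod_cast (by omega : 2 ≤ #Sᶜ))
  rw [hcard] at harith
  rw [hμ₂] at hspec
  have : (Fintype.card α : ℝ) * k ≤ Fintype.card α * cutEdges G S := by
    nlinarith [mul_le_mul_of_nonneg_left harith (Nat.cast_nonneg (α := ℝ) k)]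
  exact_mod_cast le_of_mul_le_mul_left this (by positivity)
end

section
/- Let X=(V,E,T) be a 2-dimensional (k0,k1)-regular simplicial complex whose underlying graph G₀(X) has normalized second largest adjacency eigenvalue λ̃₂ < 1/2 and |V| ≥ 4/(1−2λ̃₂). Then for every subset of edges ∅ ≠ F ⊊ E and every vertex v ∈ V, the distance of the local view F_v from the 1-coboundaries satisfies dist(F_v, B¹(X)) = min{|F_v|, k₀ − |F_v|}. -/
open Finset

/-!
A nonempty coboundary `δ(S)` is a nonempty cut of the `k₀`-regular graph `G₀(X)`, and every
nonempty cut has at least `k₀` edges: for `|S| = 1` it is the star of a vertex, and for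
`2 ≤ |S| ≤ n/2` testing `1_S - (|S|/n)·1 ⊥ 1` against `λ₂` gives
`|E(S, S̄)| ≥ (k₀ - λ₂) |S| (n - |S|) / n ≥ k₀`, by `λ̃₂ < 1/2` and `n ≥ 4/(1 - 2λ̃₂)`.
Hence the nearest coboundaries to `F_v` are `δ(∅) = ∅` and the star `δ({v}) ⊇ F_v` of `v`.
-/

open scoped RealInnerProductSpace

namespace LinearMap.IsSymmetric

variable {E ι : Type*} [NormedAddCommGroup E] [InnerProductSpace ℝ E] [Fintype ι]
  {T : E →ₗ[ℝ] E} {b : OrthonormalBasis ι ℝ E} {lam : ι → ℝ}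

lemma inner_apply_eq_sum (hT : T.IsSymmetric) (hb : ∀ i, T (b i) = lam i • b i) (x y : E) :
    ⟪x, T y⟫ = ∑ i, lam i * (⟪x, b i⟫ * ⟪b i, y⟫) := by
  rw [← b.sum_inner_mul_inner]
  refine Finset.sum_congr rfl fun i _ => ?_
  rw [← hT, hb, real_inner_smul_left]
  ring

lemma inner_eigenbasis_eq_zero (hT : T.IsSymmetric) (hb : ∀ i, T (b i) = lam i • b i) {o : E}
    {k : ℝ} (ho : T o = k • o) {i : ι} (hi : lam i ≠ k) : ⟪b i, o⟫ = 0 := by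
  have h : lam i * ⟪b i, o⟫ = k * ⟪b i, o⟫ := by
    rw [← real_inner_smul_left, ← hb, hT, ho, real_inner_smul_right]
  exact (mul_eq_mul_right_iff.mp h).resolve_left hi

lemma inner_apply_self_le (hT : T.IsSymmetric) (hb : ∀ i, T (b i) = lam i • b i) {o y : E}
    {k μ : ℝ} (ho0 : o ≠ 0) (ho : T o = k • o) (hμk : μ < k) (hcard : #{i | μ < lam i} ≤ 1)
    (hy : ⟪o, y⟫ = 0) : ⟪y, T y⟫ ≤ μ * ⟪y, y⟫ := by
  obtain ⟨j, hj⟩ : ∃ j, ⟪b j, o⟫ ≠ 0 := by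
    by_contra! h
    exact ho0 (b.repr.map_eq_zero_iff.mp (by ext i; simpa [b.repr_apply_apply] using h i))
  have hlamj : lam j = k := by_contra fun h => hj (hT.inner_eigenbasis_eq_zero hb ho h)
  have hle : ∀ i ≠ j, lam i ≤ μ := fun i hij => by
    by_contra! h
    exact hij (Finset.card_le_one.mp hcard i (by simpa using h) j (by simpa [hlamj] using hμk))
  have hyj : ⟪b j, y⟫ = 0 := by
    rw [← b.sum_inner_mul_inner, Finset.sum_eq_single j] at hy
    · rw [real_inner_comm] at hy
      exact (mul_eq_zero.mp hy).resolve_left hj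
    · intro i _ hij
      rw [real_inner_comm, hT.inner_eigenbasis_eq_zero hb ho (by linarith [hle i hij]), zero_mul]
    · simp
  rw [hT.inner_apply_eq_sum hb, ← b.sum_inner_mul_inner, Finset.mul_sum]
  refine Finset.sum_le_sum fun i _ => ?_
  rw [real_inner_comm (b i) y, ← sq]
  rcases eq_or_ne i j with rfl | hij
  · rw [hyj]; simp
  · exact mul_le_mul_of_nonneg_right (hle i hij) (sq_nonneg _)

end LinearMap.IsSymmetric

open Matrix

lemma Matrix.IsHermitian.dotProduct_mulVec_le {V : Type} [Fintype V] [DecidableEq V]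
    {A : Matrix V V ℝ} (hA : A.IsHermitian) {o y : V → ℝ} {k μ : ℝ} (ho0 : o ≠ 0)
    (ho : A *ᵥ o = k • o) (hμk : μ < k) (hcard : #{i | μ < hA.eigenvalues i} ≤ 1)
    (hy : o ⬝ᵥ y = 0) : y ⬝ᵥ A *ᵥ y ≤ μ * (y ⬝ᵥ y) := by
  have hinner (x z : V → ℝ) :
      ⟪(WithLp.toLp 2 x : EuclideanSpace ℝ V), WithLp.toLp 2 z⟫ = x ⬝ᵥ z := by
    simp [EuclideanSpace.inner_toLp_toLp, dotProduct_comm]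
  have h := (isSymmetric_toEuclideanLin_iff.mpr hA).inner_apply_self_le
    (b := hA.eigenvectorBasis) (fun i => congrArg (WithLp.toLp 2) (hA.mulVec_eigenvectorBasis i))
    (o := WithLp.toLp 2 o) (y := WithLp.toLp 2 y) (by simpa using ho0)
    (congrArg (WithLp.toLp 2) ho) hμk hcard (by rw [hinner, hy])
  rwa [hinner, hinner] at h

lemma List.countP_lt_getElem_le {α : Type*} [LinearOrder α] {L : List α}
    (hL : L.Pairwise (· ≤ ·)) {i : ℕ} (hi : i < L.length) :
    L.countP (L[i] < ·) ≤ L.length - (i + 1) := by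
  have htake : (L.take (i + 1)).countP (L[i] < ·) = 0 := by
    refine List.countP_eq_zero.mpr fun x hx => ?_
    obtain ⟨m, hm, rfl⟩ := List.mem_take_iff_getElem.mp hx
    rcases (show m ≤ i by omega).eq_or_lt with rfl | hmi
    · simp
    · simpa using List.pairwise_iff_getElem.mp hL m i (by omega) hi hmi
  have hsplit := congrArg (List.countP (L[i] < ·)) (L.take_append_drop (i + 1))
  rw [List.countP_append, htake, zero_add] at hsplit
  simpa [← hsplit] using (L.drop (i + 1)).countP_le_length

lemma Finset.card_lt_sort_getD_le_one {ι : Type*} [Fintype ι] (f : ι → ℝ) :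
    #{i | (Multiset.sort (univ.val.map f) (· ≤ ·)).getD (Fintype.card ι - 2) 0 < f i} ≤ 1 := by
  set L := Multiset.sort (univ.val.map f) (· ≤ ·)
  have hlen : L.length = Fintype.card ι := by simp [L]
  have hcount : #{i | L.getD (Fintype.card ι - 2) 0 < f i} =
      L.countP (L.getD (Fintype.card ι - 2) 0 < ·) := by
    rw [← Multiset.coe_countP, Multiset.sort_eq, Multiset.countP_map, Finset.card_def,
      Finset.filter_val]
  rw [hcount]
  rcases lt_or_ge (Fintype.card ι) 2 with h | h
  · exact L.countP_le_length.trans (by omega)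
  · have hi : Fintype.card ι - 2 < L.length := by omega
    rw [L.getD_eq_getElem _ hi]
    exact (List.countP_lt_getElem_le (Multiset.pairwise_sort _ _) hi).trans (by rw [hlen]; omega)

namespace SimpleGraph

variable {V : Type} [Fintype V] (G : SimpleGraph V) [DecidableRel G.Adj]

lemma IsRegularOfDegree.adjMatrix_mulVec_one {α : Type*} [NonAssocSemiring α] {G : SimpleGraph V}
    [DecidableRel G.Adj] {k : ℕ} (hG : G.IsRegularOfDegree k) :
    G.adjMatrix α *ᵥ 1 = (k : α) • 1 :=
  funext fun v => by simp [mulVec, dotProduct_one, ← hG v, degree, neighborFinset_eq_filter]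

variable [DecidableEq V]

lemma indicator_dotProduct_adjMatrix_mulVec (S T : Finset V) :
    (fun v => if v ∈ S then (1 : ℝ) else 0) ⬝ᵥ G.adjMatrix ℝ *ᵥ (fun v => if v ∈ T then 1 else 0)
      = #{p ∈ S ×ˢ T | G.Adj p.1 p.2} := by
  rw [dotProduct_mulVec_adjMatrix, Finset.card_filter, Finset.sum_product]
  push_cast
  simp [← Finset.sum_filter, Finset.inter_comm, Finset.inter_filter]

lemma cutEdges_compl (S : Finset V) : cutEdges G Sᶜ = cutEdges G S :=
  Finset.card_equiv (Equiv.prodComm V V) fun p => by simp [G.adj_comm, and_comm]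

lemma cutEdges_singleton (v : V) : cutEdges G {v} = G.degree v := by
  rw [cutEdges, ← card_neighborFinset_eq_degree]
  refine Finset.card_nbij' Prod.snd (Prod.mk v) ?_ ?_ ?_ ?_ <;>
    simp +contextual [Set.MapsTo, Set.LeftInvOn, Set.RightInvOn, G.ne_of_adj, eq_comm]

lemma dotProduct_adjMatrix_mulVec_le [Nonempty V] {k : ℕ} (hG : G.IsRegularOfDegree k)
    (hk : (eigsAsc G).getD (Fintype.card V - 2) 0 < k) {y : V → ℝ} (hy : ∑ v, y v = 0) :
    y ⬝ᵥ G.adjMatrix ℝ *ᵥ y ≤ (eigsAsc G).getD (Fintype.card V - 2) 0 * (y ⬝ᵥ y) :=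
  (adjMatrix_isHermitian G).dotProduct_mulVec_le one_ne_zero hG.adjMatrix_mulVec_one hk
    (Finset.card_lt_sort_getD_le_one _) (by rwa [dotProduct_comm, dotProduct_one])

lemma mul_le_cutEdges [Nonempty V] {k : ℕ} {μ : ℝ} (hG : G.IsRegularOfDegree k)
    (hμ : ∀ y : V → ℝ, ∑ v, y v = 0 → y ⬝ᵥ G.adjMatrix ℝ *ᵥ y ≤ μ * (y ⬝ᵥ y)) (S : Finset V) :
    (k - μ) * #S * ((Fintype.card V : ℝ) - #S) ≤ Fintype.card V * cutEdges G S := by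
  set A := G.adjMatrix ℝ
  set n : ℝ := (Fintype.card V : ℝ)
  set s : ℝ := (#S : ℝ)
  set c : ℝ := (cutEdges G S : ℝ)
  set x : V → ℝ := fun v => if v ∈ S then 1 else 0
  have hAo : A *ᵥ 1 = (k : ℝ) • 1 := hG.adjMatrix_mulVec_one
  have hxo : x ⬝ᵥ 1 = s := by simp [x, s, dotProduct_one]
  have hxx : x ⬝ᵥ x = s := by simp [x, s, dotProduct]
  have hoo : (1 : V → ℝ) ⬝ᵥ 1 = n := by simp [n]
  have hxAo : x ⬝ᵥ A *ᵥ 1 = k * s := by rw [hAo, dotProduct_smul, hxo, smul_eq_mul]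
  have hoAx : 1 ⬝ᵥ A *ᵥ x = k * s := by
    rw [dotProduct_mulVec, ← mulVec_transpose, transpose_adjMatrix, dotProduct_comm, hxAo]
  have hoAo : 1 ⬝ᵥ A *ᵥ 1 = k * n := by rw [hAo, dotProduct_smul, hoo, smul_eq_mul]
  have hxAx : x ⬝ᵥ A *ᵥ x = k * s - c := by
    have hcut : x ⬝ᵥ A *ᵥ (1 - x) = c := by
      have hcompl : 1 - x = fun v => if v ∈ Sᶜ then 1 else 0 := by
        ext v; by_cases hv : v ∈ S <;> simp [x, hv]
      rw [hcompl]
      exact G.indicator_dotProduct_adjMatrix_mulVec S Sᶜ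
    rw [mulVec_sub, dotProduct_sub, hxAo] at hcut
    linarith
  have hy := hμ (n • x - s • 1) (by
    rw [← dotProduct_one, sub_dotProduct, smul_dotProduct, smul_dotProduct, hxo, hoo,
      smul_eq_mul, smul_eq_mul, mul_comm, sub_self])
  simp only [mulVec_sub, mulVec_smul, dotProduct_sub, sub_dotProduct, dotProduct_smul,
    smul_dotProduct, smul_eq_mul, hxAx, hxAo, hoAx, hoAo, hxx, hxo, hoo, dotProduct_comm 1 x] at hy
  have hn : 0 < n := by simp [n, Fintype.card_pos]
  refine le_of_mul_le_mul_left ?_ hn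
  nlinarith

lemma le_cutEdges {k : ℕ} {μ : ℝ} (hG : G.IsRegularOfDegree k)
    (hμ : ∀ y : V → ℝ, ∑ v, y v = 0 → y ⬝ᵥ G.adjMatrix ℝ *ᵥ y ≤ μ * (y ⬝ᵥ y))
    (hn : 4 * k ≤ Fintype.card V * (k - 2 * μ)) {S : Finset V} (hS : S.Nonempty)
    (hSc : Sᶜ.Nonempty) : k ≤ cutEdges G S := by
  wlog hsmall : 2 * #S ≤ Fintype.card V generalizing S
  · rw [← cutEdges_compl]
    exact this hSc (by rwa [compl_compl]) (by rw [card_compl]; omega)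
  obtain hs | hs : #S = 1 ∨ 2 ≤ #S := by have := hS.card_pos; omega
  · obtain ⟨v, rfl⟩ := card_eq_one.mp hs
    rw [cutEdges_singleton, hG v]
  have : Nonempty V := ⟨hS.choose⟩
  have hcut := G.mul_le_cutEdges hG hμ S
  have hs2 : (2 : ℝ) ≤ #S := by exact_mod_cast hs
  have hsn : (2 : ℝ) * #S ≤ Fintype.card V := by exact_mod_cast hsmall
  set n : ℝ := (Fintype.card V : ℝ)
  set s : ℝ := (#S : ℝ)
  have hk : (0 : ℝ) ≤ k := k.cast_nonneg
  have hkμ : 0 ≤ (k : ℝ) - μ := by nlinarith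
  -- `s (n - s) - 2 (n - 2) = (s - 2) (n - s - 2)`
  have hsize : 2 * (n - 2) ≤ s * (n - s) := by nlinarith
  have hmain : n * k ≤ ((k : ℝ) - μ) * (2 * (n - 2)) := by
    rcases le_or_gt 0 μ with hμ0 | hμ0 <;> nlinarith
  suffices (n : ℝ) * k ≤ n * cutEdges G S by
    exact_mod_cast le_of_mul_le_mul_left this (by linarith)
  nlinarith

end SimpleGraph

lemma famDist_eq_min {α : Type} [DecidableEq α] {A B : Finset α} {Z : Set (Finset α)}
    (h0 : ∅ ∈ Z) (hB : B ∈ Z) (hAB : A ⊆ B) (hZ : ∀ z ∈ Z, z ≠ ∅ → #B ≤ #z) :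
    famDist A Z = min #A (#B - #A) := by
  have hdist0 : sdist A ∅ = #A := by simp [sdist]
  have hdistB : sdist A B = #B - #A := by
    simp [sdist, Finset.sdiff_eq_empty_iff_subset.mpr hAB, Finset.card_sdiff_of_subset hAB]
  refine le_antisymm (le_min (Nat.sInf_le ⟨∅, h0, hdist0⟩) (Nat.sInf_le ⟨B, hB, hdistB⟩)) ?_
  refine le_csInf ⟨_, ∅, h0, rfl⟩ ?_
  rintro _ ⟨z, hz, rfl⟩
  rcases eq_or_ne z ∅ with rfl | hz0
  · exact hdist0 ▸ min_le_left _ _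
  · have := Finset.le_card_sdiff A z
    have := hZ z hz hz0
    exact (min_le_right _ _).trans (by unfold sdist; omega)

section Complex

variable {V : Type} [DecidableEq V] {E : Finset (Finset V)}

lemma delta0_empty : delta0 E ∅ = ∅ := by simp [delta0]

lemma delta0_singleton (v : V) : delta0 E {v} = {e ∈ E | v ∈ e} :=
  Finset.filter_congr fun e _ => by by_cases hv : v ∈ e <;> simp [hv]

@[simp] lemma G0_adj {u v : V} : (G0 E).Adj u v ↔ u ≠ v ∧ {u, v} ∈ E := Iff.rfl

variable [Fintype V]

lemma G0_isRegularOfDegree {k : ℕ} (hE : ∀ e ∈ E, #e = 2) (hk : ∀ v, #{e ∈ E | v ∈ e} = k) :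
    (G0 E).IsRegularOfDegree k := fun v => by
  rw [← hk v, ← SimpleGraph.card_neighborFinset_eq_degree]
  refine Finset.card_bij (fun w _ => {v, w}) (fun w hw => by simp_all) ?_ ?_
  · intro w₁ h₁ w₂ h₂ h
    simp only [SimpleGraph.mem_neighborFinset, G0_adj] at h₁ h₂
    have : w₁ ∈ ({v, w₂} : Finset V) := h ▸ by simp
    simpa [Ne.symm h₁.1] using this
  · intro e he
    obtain ⟨heE, hve⟩ := Finset.mem_filter.mp he
    obtain ⟨a, b, hab, rfl⟩ := Finset.card_eq_two.mp (hE e heE)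
    rcases Finset.mem_insert.mp hve with rfl | hvb
    · exact ⟨b, by simpa using ⟨hab, heE⟩, rfl⟩
    · obtain rfl := Finset.mem_singleton.mp hvb
      rw [Finset.pair_comm] at heE ⊢
      exact ⟨a, by simpa using ⟨hab.symm, heE⟩, rfl⟩

lemma cutEdges_G0_le_card_delta0 (S : Finset V) : cutEdges (G0 E) S ≤ #(delta0 E S) := by
  refine Finset.card_le_card_of_injOn (fun p => {p.1, p.2}) ?_ ?_
  · rintro ⟨a, b⟩ hp
    simp only [Finset.mem_coe, Finset.mem_filter, Finset.mem_product, Finset.mem_compl,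
      G0_adj] at hp
    simp [delta0, hp.2.2, Finset.insert_inter_of_mem hp.1.1,
      Finset.singleton_inter_of_notMem hp.1.2]
  · rintro ⟨a, b⟩ hp ⟨c, d⟩ hq (h : ({a, b} : Finset V) = {c, d})
    simp only [Finset.mem_coe, Finset.mem_filter, Finset.mem_product, Finset.mem_compl] at hp hq
    have ha : a ∈ ({c, d} : Finset V) := h ▸ by simp
    have hb : b ∈ ({c, d} : Finset V) := h ▸ by simp
    simp only [Finset.mem_insert, Finset.mem_singleton] at ha hb
    grind

lemma nonempty_of_delta0_ne_empty (hE : ∀ e ∈ E, #e = 2) {S : Finset V} (h : delta0 E S ≠ ∅) :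
    S.Nonempty ∧ Sᶜ.Nonempty := by
  obtain ⟨e, he⟩ := Finset.nonempty_iff_ne_empty.mpr h
  obtain ⟨heE, hone⟩ := Finset.mem_filter.mp he
  refine ⟨(Finset.card_pos.mp (by rw [hone]; exact one_pos)).mono Finset.inter_subset_right, ?_⟩
  rw [Finset.nonempty_iff_ne_empty, Ne, Finset.compl_eq_empty_iff]
  rintro rfl
  simp [hE e heE] at hone

lemma le_card_delta0 {k : ℕ} (hE : ∀ e ∈ E, #e = 2) (hk : ∀ v, #{e ∈ E | v ∈ e} = k)
    (hlam : normEig (G0 E) k 2 < 1 / 2)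
    (hV : 4 / (1 - 2 * normEig (G0 E) k 2) ≤ (Fintype.card V : ℝ))
    {S : Finset V} (hS : delta0 E S ≠ ∅) : k ≤ #(delta0 E S) := by
  obtain ⟨hSne, hScne⟩ := nonempty_of_delta0_ne_empty hE hS
  have : Nonempty V := ⟨hSne.choose⟩
  -- for `k = 0` the hypotheses on `normEig` are about a division by zero and say nothing
  rcases k.eq_zero_or_pos with rfl | hk0
  · exact Nat.zero_le _
  set μ := (eigsAsc (G0 E)).getD (Fintype.card V - 2) 0
  have hkR : (0 : ℝ) < k := by exact_mod_cast hk0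
  have hnorm : normEig (G0 E) k 2 = μ / k := rfl
  rw [hnorm] at hlam hV
  have hgap : 0 < 1 - 2 * (μ / k) := by linarith
  have hμk : μ < k := by
    have := (div_lt_iff₀ hkR).mp hlam
    linarith
  replace hV : 4 * (k : ℝ) ≤ Fintype.card V * (k - 2 * μ) := by
    have h4 := mul_le_mul_of_nonneg_right ((div_le_iff₀ hgap).mp hV) hkR.le
    rwa [mul_assoc, sub_mul, mul_assoc, div_mul_cancel₀ _ hkR.ne', one_mul] at h4
  have hreg := G0_isRegularOfDegree hE hk
  exact ((G0 E).le_cutEdges hreg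
    (fun y hy => (G0 E).dotProduct_adjMatrix_mulVec_le hreg hμk hy) hV hSne hScne).trans
    (cutEdges_G0_le_card_delta0 S)

end Complex

theorem dist_of_local_view_from_coboundaries_general
    {V : Type} [Fintype V] [DecidableEq V] (E T : Finset (Finset V))
    (k₀ k₁ : ℕ) (hX : IsComplex E T) (hreg : IsRegularComplex E T k₀ k₁)
    (hlam : normEig (G0 E) k₀ 2 < 1 / 2)
    (hV : 4 / (1 - 2 * normEig (G0 E) k₀ 2) ≤ (Fintype.card V : ℝ))
    (F : Finset (Finset V)) (hF : F ⊆ E) (v : V) :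
    famDist (localView F v) (B1 E) =
      min (localView F v).card (k₀ - (localView F v).card) := by
  obtain ⟨hE, -, -⟩ := hX
  have hstar : #(delta0 E {v}) = k₀ := by rw [delta0_singleton, hreg.1 v]
  rw [← hstar]
  refine famDist_eq_min ⟨∅, delta0_empty.symm⟩ ⟨{v}, rfl⟩ ?_ ?_
  · rw [delta0_singleton]
    exact Finset.filter_subset_filter _ hF
  · rintro _ ⟨S, rfl⟩ hS
    rw [hstar]
    exact le_card_delta0 hE hreg.1 hlam hV hS

theorem dist_of_local_view_from_coboundaries
    {V : Type} [Fintype V] [DecidableEq V] (E T : Finset (Finset V))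
    (k₀ k₁ : ℕ) (hX : IsComplex E T) (hreg : IsRegularComplex E T k₀ k₁)
    (hlam : normEig (G0 E) k₀ 2 < 1 / 2)
    (hV : 4 / (1 - 2 * normEig (G0 E) k₀ 2) ≤ (Fintype.card V : ℝ))
    (F : Finset (Finset V)) (hF : F ⊆ E) (hF0 : F ≠ ∅) (hFE : F ≠ E) (v : V) :
    famDist (localView F v) (B1 E) =
      min (localView F v).card (k₀ - (localView F v).card) :=
  dist_of_local_view_from_coboundaries_general E T k₀ k₁ hX hreg hlam hV F hF v
end

section
/- Let X=(V,E,T) be a 2-dimensional simplicial complex in which every edge is contained in exactly k₁ triangles, k₁ ≥ 1. Then the smallest normalized adjacency eigenvalue of the edge-graph G₁(X), which is a 2k₁-regular graph, satisfies λ̃ₙ(G₁(X)) ≥ −17/18. -/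
open Finset

/-! The matrix `A(G₁) + k₁ I` is the Gram matrix `N Nᵀ` of the edge–triangle incidence matrix `N`:
two distinct edges lie in at most one common triangle, namely their union, and an edge lies in
exactly `k₁` triangles. Hence it is positive semidefinite, every adjacency eigenvalue of `G₁` is at
least `-k₁`, and `λ̃ₙ ≥ -k₁ / 2k₁ = -1/2 ≥ -17/18`. -/

namespace Finset

variable {V : Type} [DecidableEq V]

theorem card_filter_superset_pair {T : Finset (Finset V)} {e f : Finset V} {n : ℕ}
    (he : e.card = n) (hf : f.card = n) (hT : ∀ t ∈ T, t.card = n + 1) (hef : e ≠ f) :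
    (T.filter fun t => e ⊆ t ∧ f ⊆ t).card = if e ∪ f ∈ T then 1 else 0 := by
  have hunion : n + 1 ≤ (e ∪ f).card := by
    have hfe : ¬f ⊆ e := fun h => hef (eq_of_subset_of_card_le h (by omega)).symm
    rw [← he]
    exact card_lt_card (ssubset_of_subset_not_subset subset_union_left
      fun h => hfe (subset_union_right.trans h))
  have hfilter : (T.filter fun t => e ⊆ t ∧ f ⊆ t) = T.filter (· = e ∪ f) := by
    refine filter_congr fun t ht => ?_
    rw [← union_subset_iff]
    exact ⟨fun h => (eq_of_subset_of_card_le h (by rw [hT t ht]; exact hunion)).symm,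
      fun h => h.ge⟩
  rw [hfilter, filter_eq']
  split_ifs <;> simp

end Finset

open Matrix
open scoped ComplexOrder

theorem Matrix.IsHermitian.neg_le_eigenvalues_of_posSemidef_add_smul_one {n 𝕜 : Type*}
    [Fintype n] [DecidableEq n] [RCLike 𝕜] {A : Matrix n n 𝕜} (hA : A.IsHermitian) {c : ℝ}
    (hpsd : (A + (c : 𝕜) • 1).PosSemidef) (i : n) : -c ≤ hA.eigenvalues i := by
  have hunit : star ⇑(hA.eigenvectorBasis i) ⬝ᵥ ⇑(hA.eigenvectorBasis i) = 1 := by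
    rw [dotProduct_comm, ← EuclideanSpace.inner_eq_star_dotProduct]
    simp [hA.eigenvectorBasis.orthonormal.1 i]
  have h := hpsd.re_dotProduct_nonneg (hA.eigenvectorBasis i)
  rw [add_mulVec, dotProduct_add, smul_mulVec, one_mulVec, dotProduct_smul, hunit, map_add,
    ← hA.eigenvalues_eq] at h
  simpa [neg_le_iff_add_nonneg] using h

section EdgeGraph

variable {V : Type} [DecidableEq V] (E T : Finset (Finset V))

def edgeTriangleIncidence : Matrix {e // e ∈ E} {t // t ∈ T} ℝ :=
  of fun e t => if e.val ⊆ t.val then 1 else 0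

theorem edgeTriangleIncidence_mul_transpose_apply (e f : {e // e ∈ E}) :
    (edgeTriangleIncidence E T * (edgeTriangleIncidence E T)ᵀ) e f =
      (T.filter fun t => e.val ⊆ t ∧ f.val ⊆ t).card := by
  simp only [edgeTriangleIncidence, mul_apply, transpose_apply, of_apply, ite_zero_mul_ite_zero,
    mul_one]
  rw [Finset.sum_coe_sort T (fun t => if e.val ⊆ t ∧ f.val ⊆ t then (1 : ℝ) else 0),
    Finset.sum_boole]

variable {E T}

theorem adjMatrix_edgeGraph_add_smul_one {k₁ : ℕ} (hX : IsComplex E T)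
    (hreg : ∀ e ∈ E, (T.filter (fun t => e ⊆ t)).card = k₁) :
    SimpleGraph.adjMatrix ℝ (EdgeGraph E T) + (k₁ : ℝ) • 1 =
      edgeTriangleIncidence E T * (edgeTriangleIncidence E T)ᵀ := by
  ext e f
  rw [edgeTriangleIncidence_mul_transpose_apply, Matrix.add_apply, Matrix.smul_apply, one_apply,
    SimpleGraph.adjMatrix_apply]
  by_cases hef : e = f
  · subst hef
    simp [hreg e.val e.prop]
  · rw [Finset.card_filter_superset_pair (hX.1 _ e.prop) (hX.1 _ f.prop) hX.2.1
      (Subtype.coe_ne_coe.mpr hef)]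
    simp [EdgeGraph, hef]

theorem neg_le_eigenvalues_adjMatrix_edgeGraph {k₁ : ℕ} (hX : IsComplex E T)
    (hreg : ∀ e ∈ E, (T.filter (fun t => e ⊆ t)).card = k₁) (e : {e // e ∈ E}) :
    -(k₁ : ℝ) ≤ (adjMatrix_isHermitian (EdgeGraph E T)).eigenvalues e := by
  refine IsHermitian.neg_le_eigenvalues_of_posSemidef_add_smul_one _ ?_ e
  rw [RCLike.ofReal_real_eq_id, id, adjMatrix_edgeGraph_add_smul_one hX hreg]
  exact posSemidef_self_mul_conjTranspose _

end EdgeGraph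

theorem le_eigsAsc_getD {α : Type} [Fintype α] [DecidableEq α] (G : SimpleGraph α)
    [DecidableRel G.Adj] {b : ℝ} (hb : b ≤ 0)
    (heig : ∀ i, b ≤ (adjMatrix_isHermitian G).eigenvalues i) (j : ℕ) :
    b ≤ (eigsAsc G).getD j 0 := by
  rw [List.getD_eq_getElem?_getD]
  cases h : (eigsAsc G)[j]? with
  | none => exact hb
  | some x =>
    obtain ⟨i, -, rfl⟩ := Multiset.mem_map.mp
      ((Multiset.mem_sort _).mp (List.mem_of_getElem? h))
    exact heig i

theorem edgegraph_smallest_eigenvalue_bound_general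
    {V : Type} [DecidableEq V] (E T : Finset (Finset V))
    (k₁ : ℕ) (hX : IsComplex E T)
    (hreg : ∀ e ∈ E, (T.filter (fun t => e ⊆ t)).card = k₁) :
    -(17 / 18 : ℝ) ≤ normEig (EdgeGraph E T) (2 * k₁) (Fintype.card {e // e ∈ E}) := by
  have hmin : -(k₁ : ℝ) ≤ (eigsAsc (EdgeGraph E T)).getD 0 0 :=
    le_eigsAsc_getD _ (by simp) (neg_le_eigenvalues_adjMatrix_edgeGraph hX hreg) 0
  calc -(17 / 18 : ℝ) ≤ -(k₁ : ℝ) / (2 * k₁) := by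
        rcases Nat.eq_zero_or_pos k₁ with rfl | hk
        · norm_num
        · rw [neg_div, mul_comm, ← div_div, div_self (by positivity)]
          norm_num
    _ ≤ normEig (EdgeGraph E T) (2 * k₁) (Fintype.card {e // e ∈ E}) := by
        rw [normEig, Nat.sub_self]
        push_cast
        exact div_le_div_of_nonneg_right hmin (by positivity)

theorem edgegraph_smallest_eigenvalue_bound
    {V : Type} [Fintype V] [DecidableEq V] (E T : Finset (Finset V))
    (k₁ : ℕ) (hk : 1 ≤ k₁) (hX : IsComplex E T)
    (hreg : ∀ e ∈ E, (T.filter (fun t => e ⊆ t)).card = k₁) :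
    -(17 / 18 : ℝ) ≤ normEig (EdgeGraph E T) (2 * k₁) (Fintype.card {e // e ∈ E}) :=
  edgegraph_smallest_eigenvalue_bound_general E T k₁ hX hreg
end
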